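/- Fix l ∈ ℕ, l ≥ 1, and let K_l : [0,∞) → [0,1] be the folding map K_l(x) = lx − 2i on [2i/l, (2i+1)/l] and K_l(x) = −lx + 2i on [(2i−1)/l, 2i/l]. Let p : [0,∞) → ℝ be a probability density of bounded variation (p ≥ 0, ∫_{[0,∞)} p = 1, total variation V(p) < ∞), and let d_l be the Radon–Nikodym derivative with respect to Lebesgue measure of the pushforward under K_l of the measure with density p. Then ∫_{[0,1]} |d_l(x) − 1| dx ≤ 2·V(p)/l. -/

import Mathlib

open MeasureTheory

/-- The folding map `K_l : [0,∞) → [0,1]`, `K_l(x) = lx − 2i` on `[2i/l,(2i+1)/l]`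
and `K_l(x) = −lx + 2i` on `[(2i−1)/l, 2i/l]`; equivalently
`K_l(x) = 1 − |((lx) mod 2) − 1|`. -/
noncomputable def foldMap (l : ℕ) (x : ℝ) : ℝ :=
  1 - |2 * Int.fract ((l : ℝ) * x / 2) - 1|

/-!
Cut `[0, ∞)` at the points `k / l`. On the `k`-th piece `foldMap l` is affine with slope `±l`
onto `[0, 1]`, so the pushed-forward density is the transfer operator
`Q y = l⁻¹ ∑ₖ p (xₖ y)`, where `xₖ y` is the preimage of `y` in the `k`-th piece.
For `y, y' ∈ [0, 1]` the points `xₖ y, xₖ y'` lie in the same piece and the pieces are ordered,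
so `∑ₖ |p (xₖ y) - p (xₖ y')| ≤ V(p)`: the oscillation of `Q` on `[0, 1]` is at most `V(p) / l`.
As `Q` has mean `1` on `[0, 1]`, this gives `|Q - 1| ≤ V(p) / l` there.
-/

open Set
open scoped ENNReal

section Variation

variable {α E : Type*} [LinearOrder α] [PseudoEMetricSpace E]

theorem eVariationOn.tsum_edist_le (f : α → E) {a : ℕ → α} (ha : Monotone a)
    {x y : ℕ → α} (hx : ∀ k, x k ∈ Icc (a k) (a (k + 1)))
    (hy : ∀ k, y k ∈ Icc (a k) (a (k + 1))) :
    ∑' k, edist (f (x k)) (f (y k)) ≤ eVariationOn f (Ici (a 0)) := by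
  have hmem : ∀ k, a k ∈ Ici (a 0) := fun k => ha (Nat.zero_le k)
  refine ENNReal.tsum_le_of_sum_range_le fun n => ?_
  calc ∑ k ∈ Finset.range n, edist (f (x k)) (f (y k))
      ≤ ∑ k ∈ Finset.range n, eVariationOn f (Ici (a 0) ∩ Icc (a k) (a (k + 1))) := by
        gcongr with k
        exact eVariationOn.edist_le f ⟨(hmem k).trans (hx k).1, hx k⟩
          ⟨(hmem k).trans (hy k).1, hy k⟩
    _ = eVariationOn f (Ici (a 0) ∩ Icc (a 0) (a n)) :=
        eVariationOn.sum f ha fun i _ _ => hmem i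
    _ ≤ eVariationOn f (Ici (a 0)) := eVariationOn.mono f inter_subset_left

end Variation

theorem ENNReal.abs_toReal_sub_toReal_le {a b c : ℝ≥0∞} (hb : b ≠ ∞) (hc : c ≠ ∞)
    (hab : a ≤ b + c) (hba : b ≤ a + c) : |a.toReal - b.toReal| ≤ c.toReal := by
  have ha : a ≠ ∞ := ne_top_of_le_ne_top (ENNReal.add_ne_top.2 ⟨hb, hc⟩) hab
  have h₁ := ENNReal.toReal_mono (ENNReal.add_ne_top.2 ⟨hb, hc⟩) hab
  have h₂ := ENNReal.toReal_mono (ENNReal.add_ne_top.2 ⟨ha, hc⟩) hba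
  rw [ENNReal.toReal_add hb hc] at h₁
  rw [ENNReal.toReal_add ha hc] at h₂
  exact abs_sub_le_iff.2 ⟨by linarith, by linarith⟩

theorem ENNReal.ofReal_le_ofReal_add_edist (a b : ℝ) :
    ENNReal.ofReal a ≤ ENNReal.ofReal b + edist a b := by
  rw [edist_dist]
  calc ENNReal.ofReal a ≤ ENNReal.ofReal (b + dist a b) :=
        ENNReal.ofReal_le_ofReal (by linarith [Real.sub_le_dist a b])
    _ ≤ ENNReal.ofReal b + ENNReal.ofReal (dist a b) := ENNReal.ofReal_add_le

theorem integral_abs_toReal_sub_lintegral_le {α : Type*} [MeasurableSpace α]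
    {μ : Measure α} [IsProbabilityMeasure μ] {Q : α → ℝ≥0∞} {s : Set α} {c : ℝ≥0∞}
    (hs : ∀ᵐ x ∂μ, x ∈ s) (hQ : ∀ x ∈ s, ∀ y ∈ s, Q x ≤ Q y + c)
    (hint : ∫⁻ x, Q x ∂μ ≠ ∞) (hc : c ≠ ∞) :
    ∫ x, |(Q x).toReal - (∫⁻ y, Q y ∂μ).toReal| ∂μ ≤ c.toReal := by
  have hdev : ∀ x ∈ s, |(Q x).toReal - (∫⁻ y, Q y ∂μ).toReal| ≤ c.toReal := by
    intro x hx
    refine ENNReal.abs_toReal_sub_toReal_le hint hc ?_ ?_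
    · calc Q x = ∫⁻ _, Q x ∂μ := by simp
        _ ≤ ∫⁻ y, Q y + c ∂μ := lintegral_mono_ae (hs.mono fun y hy => hQ x hx y hy)
        _ = ∫⁻ y, Q y ∂μ + c := by simp [lintegral_add_right _ measurable_const]
    · calc ∫⁻ y, Q y ∂μ ≤ ∫⁻ _, Q x + c ∂μ :=
            lintegral_mono_ae (hs.mono fun y hy => hQ y hy x hx)
        _ = Q x + c := by simp
  calc ∫ x, |(Q x).toReal - (∫⁻ y, Q y ∂μ).toReal| ∂μ ≤ ∫ _, c.toReal ∂μ :=
        integral_mono_of_nonneg (ae_of_all _ fun _ => abs_nonneg _) (integrable_const _)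
          (hs.mono hdev)
    _ = c.toReal := by simp

section Folding

variable {l : ℕ}

noncomputable def foldBranch (l k : ℕ) (y : ℝ) : ℝ :=
  (if Even k then k + y else k + 1 - y) / l

-- The transfer (Perron–Frobenius) operator of `foldMap l`.
noncomputable def foldDensity (l : ℕ) (h : ℝ → ℝ≥0∞) (y : ℝ) : ℝ≥0∞ :=
  (l : ℝ≥0∞)⁻¹ * ∑' k, h (foldBranch l k y)

theorem measurable_foldMap (l : ℕ) : Measurable (foldMap l) := by
  unfold foldMap
  fun_prop

theorem measurable_foldBranch (l k : ℕ) : Measurable (foldBranch l k) := by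
  unfold foldBranch
  split_ifs <;> fun_prop

theorem hasDerivAt_foldBranch (l k : ℕ) (y : ℝ) :
    HasDerivAt (foldBranch l k) ((if Even k then 1 else -1) / l) y := by
  unfold foldBranch
  split_ifs
  · exact ((hasDerivAt_id y).const_add _).div_const _
  · exact ((hasDerivAt_id y).const_sub _).div_const _

theorem foldBranch_injective (hl : 0 < l) (k : ℕ) : Function.Injective (foldBranch l k) := by
  intro y y' h
  have hl' : (l : ℝ) ≠ 0 := by positivity
  simp only [foldBranch, div_left_inj' hl'] at h
  split_ifs at h <;> linarith

theorem image_foldBranch_Icc (hl : 0 < l) (k : ℕ) :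
    foldBranch l k '' Icc 0 1 = Icc ((k : ℝ) / l) (((k + 1 : ℕ) : ℝ) / l) := by
  have hl' : (0 : ℝ) < l := by positivity
  by_cases hk : Even k
  · have : foldBranch l k = (· * (l : ℝ)⁻¹) ∘ ((k : ℝ) + ·) := by
      ext y; simp [foldBranch, hk, div_eq_mul_inv]
    rw [this, image_comp, image_const_add_Icc, image_mul_right_Icc' _ _ (inv_pos.2 hl')]
    push_cast; simp [div_eq_mul_inv]
  · have : foldBranch l k = (· * (l : ℝ)⁻¹) ∘ ((k + 1 : ℝ) - ·) := by
      ext y; simp [foldBranch, hk, div_eq_mul_inv]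
    rw [this, image_comp, image_const_sub_Icc, image_mul_right_Icc' _ _ (inv_pos.2 hl')]
    push_cast; simp [div_eq_mul_inv]

theorem foldBranch_mem_Icc (hl : 0 < l) (k : ℕ) {y : ℝ} (hy : y ∈ Icc 0 1) :
    foldBranch l k y ∈ Icc ((k : ℝ) / l) (((k + 1 : ℕ) : ℝ) / l) :=
  image_foldBranch_Icc hl k ▸ mem_image_of_mem _ hy

theorem foldMap_foldBranch (hl : 0 < l) (k : ℕ) {y : ℝ} (hy : y ∈ Icc 0 1) :
    foldMap l (foldBranch l k y) = y := by
  have hl' : (l : ℝ) ≠ 0 := by positivity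
  obtain ⟨hy₀, hy₁⟩ := hy
  rcases Nat.even_or_odd' k with ⟨i, rfl | rfl⟩
  · have : (l : ℝ) * foldBranch l (2 * i) y / 2 = i + y / 2 := by
      simp only [foldBranch, Nat.even_mul, even_two, true_or, if_true]
      field_simp; push_cast; ring
    rw [foldMap, this, Int.fract_natCast_add, Int.fract_eq_self.2 ⟨by linarith, by linarith⟩,
      abs_of_nonpos (by linarith)]
    ring
  · have : (l : ℝ) * foldBranch l (2 * i + 1) y / 2 = i + (1 - y / 2) := by
      simp only [foldBranch, Nat.not_even_bit1, if_false]
      field_simp; push_cast; ring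
    rw [foldMap, this, Int.fract_natCast_add]
    rcases hy₀.eq_or_lt with rfl | hy₀
    · norm_num
    · rw [Int.fract_eq_self.2 ⟨by linarith, by linarith⟩, abs_of_nonneg (by linarith)]
      ring

theorem measurable_foldDensity (l : ℕ) {h : ℝ → ℝ≥0∞} (hh : Measurable h) :
    Measurable (foldDensity l h) :=
  measurable_const.mul (.tsum fun k => hh.comp (measurable_foldBranch l k))

theorem lintegral_Icc_eq_foldBranch (hl : 0 < l) (k : ℕ) (h : ℝ → ℝ≥0∞) :
    ∫⁻ x in Icc ((k : ℝ) / l) (((k + 1 : ℕ) : ℝ) / l), h x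
      = (l : ℝ≥0∞)⁻¹ * ∫⁻ y in Icc 0 1, h (foldBranch l k y) := by
  have hderiv : |(if Even k then 1 else -1) / (l : ℝ)| = (l : ℝ)⁻¹ := by
    split_ifs <;> simp [abs_div]
  rw [← image_foldBranch_Icc hl k,
    lintegral_image_eq_lintegral_abs_deriv_mul measurableSet_Icc
      (fun y _ => (hasDerivAt_foldBranch l k y).hasDerivWithinAt) (foldBranch_injective hl k).injOn,
    hderiv, ENNReal.ofReal_inv_of_pos (by positivity), ENNReal.ofReal_natCast,
    lintegral_const_mul' _ _ (by simpa using hl.ne')]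

theorem lintegral_Ici_eq_foldDensity (hl : 0 < l) {h : ℝ → ℝ≥0∞} (hh : Measurable h) :
    ∫⁻ x in Ici 0, h x = ∫⁻ y in Icc 0 1, foldDensity l h y := by
  set a : ℕ → ℝ := fun k => k / l
  have ha : Monotone a := fun i j hij => by simp only [a]; gcongr
  have hunion : ⋃ k, Ico (a k) (a (Order.succ k)) = Ici 0 := by
    refine (iUnion_Ico_map_succ_eq_Ici (fun k => ha bot_le) ?_).trans (by simp [a])
    exact Filter.not_bddAbove_of_tendsto_atTop
      (tendsto_natCast_atTop_atTop.atTop_div_const (by positivity))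
  calc ∫⁻ x in Ici 0, h x = ∑' k, ∫⁻ x in Ico (a k) (a (Order.succ k)), h x := by
        rw [← hunion,
          lintegral_iUnion (fun _ => measurableSet_Ico) ha.pairwise_disjoint_on_Ico_succ]
    _ = ∑' k, (l : ℝ≥0∞)⁻¹ * ∫⁻ y in Icc 0 1, h (foldBranch l k y) := by
        congr with k
        rw [Order.succ_eq_add_one, Measure.restrict_congr_set Ico_ae_eq_Icc,
          lintegral_Icc_eq_foldBranch hl]
    _ = ∫⁻ y in Icc 0 1, foldDensity l h y := by
        rw [ENNReal.tsum_mul_left, ← lintegral_tsum (f := fun k y => h (foldBranch l k y))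
          fun k => (hh.comp (measurable_foldBranch l k)).aemeasurable,
          ← lintegral_const_mul' _ _ (by simpa using hl.ne')]
        rfl

theorem map_foldMap_withDensity (hl : 0 < l) {h : ℝ → ℝ≥0∞} (hh : Measurable h)
    (h_neg : ∀ x < 0, h x = 0) :
    (volume.withDensity h).map (foldMap l)
      = volume.withDensity ((Icc 0 1).indicator (foldDensity l h)) := by
  ext A hA
  have hA' := measurable_foldMap l hA
  have hsupp : ((foldMap l ⁻¹' A).indicator h).support ⊆ Ici 0 := fun x hx =>
    mem_Ici.2 <| not_lt.1 fun hneg => hx (by simp [indicator, h_neg x hneg])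
  have hbranch : EqOn (foldDensity l ((foldMap l ⁻¹' A).indicator h))
      (A.indicator (foldDensity l h)) (Icc 0 1) := fun y hy => by
    by_cases hyA : y ∈ A <;> simp [foldDensity, indicator, foldMap_foldBranch hl _ hy, hyA]
  calc (volume.withDensity h).map (foldMap l) A
      = ∫⁻ x, (foldMap l ⁻¹' A).indicator h x := by
        rw [Measure.map_apply (measurable_foldMap l) hA, withDensity_apply _ hA',
          lintegral_indicator hA']
    _ = ∫⁻ x in Ici 0, (foldMap l ⁻¹' A).indicator h x :=
        (setLIntegral_eq_of_support_subset hsupp).symm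
    _ = ∫⁻ y in Icc 0 1, A.indicator (foldDensity l h) y := by
        rw [lintegral_Ici_eq_foldDensity hl (hh.indicator hA'),
          setLIntegral_congr_fun measurableSet_Icc hbranch]
    _ = volume.withDensity ((Icc 0 1).indicator (foldDensity l h)) A := by
        rw [withDensity_apply _ hA, setLIntegral_indicator hA,
          setLIntegral_indicator measurableSet_Icc, inter_comm]

theorem rnDeriv_map_foldMap_withDensity (hl : 0 < l) {h : ℝ → ℝ≥0∞} (hh : Measurable h)
    (h_neg : ∀ x < 0, h x = 0) :
    ((volume.withDensity h).map (foldMap l)).rnDeriv volume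
      =ᵐ[volume.restrict (Icc 0 1)] foldDensity l h := by
  rw [map_foldMap_withDensity hl hh h_neg]
  filter_upwards [ae_restrict_of_ae (Measure.rnDeriv_withDensity volume
    ((measurable_foldDensity l hh).indicator measurableSet_Icc)),
    ae_restrict_mem measurableSet_Icc] with x hx hmem
  rw [hx, indicator_of_mem hmem]

theorem foldDensity_le_add_eVariationOn (hl : 0 < l) (p : ℝ → ℝ) {y y' : ℝ}
    (hy : y ∈ Icc 0 1) (hy' : y' ∈ Icc 0 1) :
    foldDensity l (fun x => ENNReal.ofReal (p x)) y
      ≤ foldDensity l (fun x => ENNReal.ofReal (p x)) y'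
        + (l : ℝ≥0∞)⁻¹ * eVariationOn p (Ici 0) := by
  have hvar : ∑' k, edist (p (foldBranch l k y)) (p (foldBranch l k y'))
      ≤ eVariationOn p (Ici 0) := by
    simpa using eVariationOn.tsum_edist_le p (a := fun k => (k : ℝ) / l)
      (fun i j hij => by simp only; gcongr)
      (fun k => foldBranch_mem_Icc hl k hy) (fun k => foldBranch_mem_Icc hl k hy')
  rw [foldDensity, foldDensity, ← mul_add]
  gcongr
  calc ∑' k, ENNReal.ofReal (p (foldBranch l k y))
      ≤ ∑' k, (ENNReal.ofReal (p (foldBranch l k y'))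
          + edist (p (foldBranch l k y)) (p (foldBranch l k y'))) :=
        ENNReal.tsum_le_tsum fun k => ENNReal.ofReal_le_ofReal_add_edist _ _
    _ = ∑' k, ENNReal.ofReal (p (foldBranch l k y'))
          + ∑' k, edist (p (foldBranch l k y)) (p (foldBranch l k y')) := ENNReal.tsum_add
    _ ≤ _ := by gcongr

end Folding

theorem foldMap_L1_rate_of_boundedVariation
    (l : ℕ) (hl : 1 ≤ l)
    (p : ℝ → ℝ) (hmeas : Measurable p) (hpos : ∀ x, 0 ≤ p x)
    (hsupp : ∀ x < (0 : ℝ), p x = 0)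
    (hint : IntegrableOn p (Set.Ici (0 : ℝ)))
    (hnorm : ∫ x in Set.Ici (0 : ℝ), p x = 1)
    (hbv : BoundedVariationOn p (Set.Ici (0 : ℝ))) :
    (∫ x in Set.Icc (0 : ℝ) 1,
      |((((volume.withDensity (fun y => ENNReal.ofReal (p y))).map
          (foldMap l)).rnDeriv volume) x).toReal - 1|)
      ≤ 2 * (eVariationOn p (Set.Ici (0 : ℝ))).toReal / l := by
  have hl₀ : 0 < l := hl
  set P : ℝ → ℝ≥0∞ := fun y => ENNReal.ofReal (p y)
  set V := eVariationOn p (Ici (0 : ℝ))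
  have hP : Measurable P := hmeas.ennreal_ofReal
  have hmass : ∫⁻ y in Icc 0 1, foldDensity l P y = 1 := by
    rw [← lintegral_Ici_eq_foldDensity hl₀ hP,
      ← ofReal_integral_eq_lintegral_ofReal hint (ae_of_all _ hpos), hnorm, ENNReal.ofReal_one]
  have : IsProbabilityMeasure (volume.restrict (Icc (0 : ℝ) 1)) := ⟨by simp⟩
  have hdev := integral_abs_toReal_sub_lintegral_le (ae_restrict_mem measurableSet_Icc)
    (fun x hx y hy => foldDensity_le_add_eVariationOn hl₀ p hx hy)
    (hmass ▸ ENNReal.one_ne_top) (ENNReal.mul_ne_top (by simpa using hl₀.ne') hbv)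
  rw [hmass, ENNReal.toReal_one] at hdev
  have hrnDeriv := rnDeriv_map_foldMap_withDensity hl₀ hP fun x hx => by simp [P, hsupp x hx]
  rw [integral_congr_ae (hrnDeriv.mono fun x hx => by rw [hx])]
  calc _ ≤ ((l : ℝ≥0∞)⁻¹ * V).toReal := hdev
    _ = V.toReal / l := by simp [div_eq_inv_mul]
    _ ≤ 2 * V.toReal / l := by gcongr; linarith [V.toReal_nonneg]
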